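/- arXiv:1812.07257 — 2 statements merged into one kernel-verified Lean document; each statement's English description precedes it below -/
import Mathlib

section
/- Let H be a Hilbert space and T : K(H) → K(H) a bounded linear operator on the algebra of compact operators satisfying T(ST') = T(S)T' for all compact S, T'. Then there exists a bounded operator a ∈ B(H) such that T(S) = aS for all compact S; i.e., the multiplier algebra of K(H) is B(H). -/
/-!
Fix a unit vector `w` and write `θₓ = rankOne x w`, so that `θₓ w = x` and `S ∘ θₓ = θ_{S x}`.
The multiplier property gives `T(S) x = T(S θₓ) w = T(θ_{S x}) w`, hence `T(S) = a S` for the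
bounded operator `a x := T(θₓ) w`.
-/

open ContinuousLinearMap InnerProductSpace

section

variable {𝕜 E : Type*} [RCLike 𝕜] [NormedAddCommGroup E] [InnerProductSpace 𝕜 E]

theorem isCompactOperator_rankOne {F : Type*} [NormedAddCommGroup F] [InnerProductSpace 𝕜 F]
    (x : E) (y : F) : IsCompactOperator (rankOne 𝕜 x y) :=
  (isCompactOperator_of_locallyCompactSpace_dom (innerSL 𝕜 y)).clm_comp (toSpanSingleton 𝕜 x)

theorem exists_eq_mul_of_map_mul_right {K : Submodule 𝕜 (E →L[𝕜] E)}
    (hK : ∀ x y : E, rankOne 𝕜 x y ∈ K)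
    (hKmul : ∀ x y : E →L[𝕜] E, x ∈ K → y ∈ K → x * y ∈ K) (T : K →L[𝕜] K)
    (hT : ∀ S S' : K,
      (T ⟨(S : E →L[𝕜] E) * (S' : E →L[𝕜] E), hKmul S S' S.2 S'.2⟩ : E →L[𝕜] E) =
        (T S : E →L[𝕜] E) * (S' : E →L[𝕜] E)) :
    ∃ a : E →L[𝕜] E, ∀ S : K, (T S : E →L[𝕜] E) = a * (S : E →L[𝕜] E) := by
  rcases subsingleton_or_nontrivial E with hE | hE
  · exact ⟨0, fun S => Subsingleton.elim _ _⟩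
  obtain ⟨v, hv⟩ := exists_ne (0 : E)
  obtain ⟨w, hw⟩ : ∃ w : E, ‖w‖ = 1 := ⟨_, norm_smul_inv_norm (𝕜 := 𝕜) hv⟩
  let R : E →L[𝕜] K := (smulRightL 𝕜 E E (innerSL 𝕜 w)).codRestrict K (hK · w)
  refine ⟨apply 𝕜 E w ∘L K.subtypeL ∘L T ∘L R, fun S => ?_⟩
  ext x
  have hrankOne_self : rankOne 𝕜 x w w = x := by simp [inner_self_eq_norm_sq_to_K, hw]
  have hmul_rankOne : (⟨S * rankOne 𝕜 x w, hKmul _ _ S.2 (hK x w)⟩ : K) =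
      R ((S : E →L[𝕜] E) x) :=
    Subtype.ext (comp_rankOne x w (S : E →L[𝕜] E))
  calc (T S : E →L[𝕜] E) x
      = ((T S : E →L[𝕜] E) * rankOne 𝕜 x w) w := by rw [mul_apply_eq_comp, hrankOne_self]
    _ = (T (R ((S : E →L[𝕜] E) x)) : E →L[𝕜] E) w := by rw [← hT S ⟨_, hK x w⟩, hmul_rankOne]
    _ = _ := rfl

end

theorem multiplier_algebra_of_compact_operators_general {H : Type} [NormedAddCommGroup H]
    [InnerProductSpace ℂ H]
    (K : Submodule ℂ (H →L[ℂ] H))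
    (hK : K = compactOperator (σ₁₄ := RingHom.id ℂ) (M₁ := H) (M₄ := H))
    (hKmul : ∀ x y : H →L[ℂ] H, x ∈ K → y ∈ K → x * y ∈ K)
    (T : K →L[ℂ] K)
    (hT : ∀ S S' : K,
      (T ⟨(S : H →L[ℂ] H) * (S' : H →L[ℂ] H), hKmul S S' S.2 S'.2⟩ : H →L[ℂ] H) =
        (T S : H →L[ℂ] H) * (S' : H →L[ℂ] H)) :
    ∃ a : H →L[ℂ] H, ∀ S : K, (T S : H →L[ℂ] H) = a * (S : H →L[ℂ] H) :=
  exists_eq_mul_of_map_mul_right (fun x y => hK ▸ isCompactOperator_rankOne x y) hKmul T hT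

/-- Every multiplier of the algebra `K(H)` of compact operators on a Hilbert space `H`
is left multiplication (composition) by a bounded operator `a ∈ B(H)`: the multiplier
algebra of `K(H)` is `B(H)`. -/
theorem multiplier_algebra_of_compact_operators {H : Type} [NormedAddCommGroup H]
    [InnerProductSpace ℂ H] [CompleteSpace H]
    (K : Submodule ℂ (H →L[ℂ] H))
    (hK : K = compactOperator (σ₁₄ := RingHom.id ℂ) (M₁ := H) (M₄ := H))
    (hKmul : ∀ x y : H →L[ℂ] H, x ∈ K → y ∈ K → x * y ∈ K)
    (T : K →L[ℂ] K)
    (hT : ∀ S S' : K,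
      (T ⟨(S : H →L[ℂ] H) * (S' : H →L[ℂ] H), hKmul S S' S.2 S'.2⟩ : H →L[ℂ] H) =
        (T S : H →L[ℂ] H) * (S' : H →L[ℂ] H)) :
    ∃ a : H →L[ℂ] H, ∀ S : K, (T S : H →L[ℂ] H) = a * (S : H →L[ℂ] H) :=
  multiplier_algebra_of_compact_operators_general K hK hKmul T hT
end

section
/- Let X be a locally compact Hausdorff space. Then every multiplier of C₀(X) is given by multiplication by a bounded continuous function: for each bounded linear T : C₀(X) → C₀(X) with T(fg) = T(f)g there exists a unique g ∈ C_b(X) with T(f) = gf for all f ∈ C₀(X), and ‖T‖ = ‖g‖_∞. -/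
/-! Since `C₀(X)` is commutative, a multiplier satisfies `T f * u = T u * f`. Evaluating at `x`
with a bump `u` of norm `≤ 1` that equals `1` near `x` gives `T f x = φ x * f x` for
`φ x := T u x`. Near `x` the function `φ` coincides with `T u`, so it is continuous, and
`‖φ x‖ ≤ ‖T u‖ ≤ ‖T‖`; the reverse bound `‖T‖ ≤ ‖φ‖_∞` is immediate. -/

open ZeroAtInfty BoundedContinuousFunction Filter Topology

theorem mul_comm_of_map_mul {R : Type*} [CommSemigroup R] {T : R → R}
    (hT : ∀ f g, T (f * g) = T f * g) (f g : R) : T f * g = T g * f := by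
  rw [← hT, mul_comm, hT]

variable {X : Type*} [TopologicalSpace X]

namespace ZeroAtInftyContinuousMap

variable {E : Type*} [NormedAddCommGroup E]

theorem norm_apply_le (f : C₀(X, E)) (x : X) : ‖f x‖ ≤ ‖f‖ :=
  norm_toBCF_eq_norm (f := f) ▸ f.toBCF.norm_coe_le_norm x

theorem norm_le_of_forall_le {f : C₀(X, E)} {C : ℝ} (hC : 0 ≤ C) (h : ∀ x, ‖f x‖ ≤ C) :
    ‖f‖ ≤ C :=
  norm_toBCF_eq_norm (f := f) ▸ (BoundedContinuousFunction.norm_le hC).2 h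

theorem exists_norm_le_one_eventuallyEq_one (𝕜 : Type*) [RCLike 𝕜] [RegularSpace X]
    [LocallyCompactSpace X] (x : X) : ∃ f : C₀(X, 𝕜), ‖f‖ ≤ 1 ∧ ⇑f =ᶠ[𝓝 x] 1 := by
  obtain ⟨K, hK, hKx⟩ := exists_compact_mem_nhds x
  obtain ⟨f, hf_one, -, hf_supp, hf_mem⟩ :=
    exists_continuous_one_zero_of_isCompact hK isClosed_empty (Set.disjoint_empty K)
  let u : C(X, 𝕜) := (⟨RCLike.ofReal, RCLike.continuous_ofReal⟩ : C(ℝ, 𝕜)).comp f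
  have hu_supp : HasCompactSupport u := hf_supp.comp_left RCLike.ofReal_zero
  refine ⟨⟨u, hu_supp.is_zero_at_infty⟩, norm_le_of_forall_le zero_le_one fun y => ?_, ?_⟩
  · change ‖((f y : ℝ) : 𝕜)‖ ≤ 1
    rw [RCLike.norm_ofReal, abs_le]
    exact ⟨(neg_nonpos.2 zero_le_one).trans (hf_mem y).1, (hf_mem y).2⟩
  · filter_upwards [hKx] with y hy
    change ((f y : ℝ) : 𝕜) = 1
    rw [hf_one hy, Pi.one_apply, RCLike.ofReal_one]

variable {𝕜 : Type*} [RCLike 𝕜] [RegularSpace X] [LocallyCompactSpace X]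

theorem exists_apply_eq_mul_apply {T : C₀(X, 𝕜) → C₀(X, 𝕜)}
    (hT : ∀ f g, T (f * g) = T f * g) : ∃ φ : X → 𝕜, ∀ f x, T f x = φ x * f x := by
  choose u hu using exists_norm_le_one_eventuallyEq_one (X := X) 𝕜
  refine ⟨fun x => T (u x) x, fun f x => ?_⟩
  have h := congrArg (· x) (mul_comm_of_map_mul hT f (u x))
  simpa only [mul_apply, (hu x).2.self_of_nhds, Pi.one_apply, mul_one] using h

theorem eq_of_forall_mul_apply_eq {φ ψ : X → 𝕜}
    (h : ∀ (f : C₀(X, 𝕜)) x, φ x * f x = ψ x * f x) : φ = ψ := by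
  funext x
  obtain ⟨u, -, hu⟩ := exists_norm_le_one_eventuallyEq_one 𝕜 x
  simpa only [hu.self_of_nhds, Pi.one_apply, mul_one] using h u x

variable {φ : X → 𝕜}

theorem continuous_of_forall_apply_eq_mul {T : C₀(X, 𝕜) → C₀(X, 𝕜)}
    (hφ : ∀ f x, T f x = φ x * f x) : Continuous φ := by
  refine continuous_iff_continuousAt.2 fun x => ?_
  obtain ⟨u, -, hu⟩ := exists_norm_le_one_eventuallyEq_one 𝕜 x
  refine (T u).continuous.continuousAt.congr ?_
  filter_upwards [hu] with y hy
  change T u y = φ y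
  rw [hφ, hy, Pi.one_apply, mul_one]

theorem norm_le_opNorm_of_forall_apply_eq_mul {T : C₀(X, 𝕜) →L[𝕜] C₀(X, 𝕜)}
    (hφ : ∀ f x, T f x = φ x * f x) (x : X) : ‖φ x‖ ≤ ‖T‖ := by
  obtain ⟨u, hu_norm, hu⟩ := exists_norm_le_one_eventuallyEq_one 𝕜 x
  calc ‖φ x‖ = ‖T u x‖ := by rw [hφ, hu.self_of_nhds, Pi.one_apply, mul_one]
    _ ≤ ‖T u‖ := norm_apply_le _ x
    _ ≤ ‖T‖ * ‖u‖ := T.le_opNorm u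
    _ ≤ ‖T‖ := mul_le_of_le_one_right (norm_nonneg T) hu_norm

theorem opNorm_eq_norm_of_forall_apply_eq_mul {T : C₀(X, 𝕜) →L[𝕜] C₀(X, 𝕜)} {g : X →ᵇ 𝕜}
    (hg : ∀ f x, T f x = g x * f x) : ‖T‖ = ‖g‖ := by
  refine le_antisymm (T.opNorm_le_bound (norm_nonneg g) fun f => ?_)
    ((BoundedContinuousFunction.norm_le (norm_nonneg T)).2
      (norm_le_opNorm_of_forall_apply_eq_mul hg))
  refine norm_le_of_forall_le (by positivity) fun x => ?_
  rw [hg, norm_mul]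
  exact mul_le_mul (g.norm_coe_le_norm x) (norm_apply_le f x) (norm_nonneg _) (norm_nonneg _)

end ZeroAtInftyContinuousMap

open ZeroAtInftyContinuousMap in
/-- For a locally compact Hausdorff space `X`, every multiplier `T` of `C₀(X)` is
multiplication by a unique `g ∈ C_b(X)`, and `‖T‖ = ‖g‖_∞`. -/
theorem multiplier_algebra_of_C0 {X : Type} [TopologicalSpace X] [LocallyCompactSpace X]
    [T2Space X] (T : C₀(X, ℂ) →L[ℂ] C₀(X, ℂ))
    (hT : ∀ f g : C₀(X, ℂ), T (f * g) = T f * g) :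
    ∃! g : X →ᵇ ℂ, (∀ (f : C₀(X, ℂ)) (x : X), T f x = g x * f x) ∧ ‖T‖ = ‖g‖ := by
  obtain ⟨φ, hφ⟩ := exists_apply_eq_mul_apply hT
  let g : X →ᵇ ℂ := .ofNormedAddCommGroup φ (continuous_of_forall_apply_eq_mul hφ) ‖T‖
    (norm_le_opNorm_of_forall_apply_eq_mul hφ)
  refine ⟨g, ⟨hφ, opNorm_eq_norm_of_forall_apply_eq_mul hφ⟩, fun g' hg' => ?_⟩
  exact DFunLike.coe_injective <| eq_of_forall_mul_apply_eq fun f x => by rw [← hg'.1, hφ]; rfl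
end
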